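/- arXiv:1707.01852 — 2 statements merged into one kernel-verified Lean document; each statement's English description precedes it below -/
import Mathlib

section
/- Let ℋ be a finite-dimensional complex Hilbert space, a > 0, and let H : (−a,a) → B(ℋ), P : (−a,a) → B(ℋ), and E : (−a,a) → ℝ be maps, all differentiable at 0, such that for every α ∈ (−a,a): H(α) is self-adjoint, P(α) is an orthogonal projection (P(α)² = P(α) = P(α)*), and H(α)P(α) = E(α)P(α). Assume further that P(0) is the orthogonal projection onto ker(H(0)−E(0)), and let R be the reduced resolvent of H(0) at E(0). Then P(0)·H′(0)·R = −P′(0)·(1 − P(0)), where H′(0) and P′(0) denote the derivatives at 0. -/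
open scoped BigOperators ComplexConjugate

noncomputable section

variable {ℋ : Type*} [NormedAddCommGroup ℋ] [InnerProductSpace ℂ ℋ] [FiniteDimensional ℂ ℋ]

/-- The orthogonal projection onto a subspace `K`, as an operator on `ℋ`. -/
noncomputable def orthProj (K : Submodule ℂ ℋ) : ℋ →L[ℂ] ℋ :=
  K.subtypeL.comp (K.orthogonalProjectionOnto)

/-- The spectral projection of `H` associated with a set `S ⊆ ℝ`: the orthogonal projection
onto the span of all eigenvectors of `H` with eigenvalue in `S`. -/
noncomputable def spectralProj (H : ℋ →L[ℂ] ℋ) (S : Set ℝ) : ℋ →L[ℂ] ℋ :=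
  orthProj (⨆ μ ∈ S, Module.End.eigenspace (H : ℋ →ₗ[ℂ] ℋ) (μ : ℂ))

/-- An operator `A` is off-diagonal with respect to a projection `P` if `PAP = 0` and
`(1−P)A(1−P) = 0`. -/
def IsOffDiagonal (P A : ℋ →L[ℂ] ℋ) : Prop :=
  P * A * P = 0 ∧ (1 - P) * A * (1 - P) = 0

/-!
Differentiating the eigenvalue equation `P(α) H(α) = E(α) P(α)` (the adjoint of `H P = E P`) at
`0` gives `P′ H + P H′ = E P′ + E′ P`, that is `P H′ = -P′ (H - E) + E′ P`. Multiplying on the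
right by the reduced resolvent `R` kills `E′ P R` and turns `(H - E) R` into `1 - P`.
-/

open Filter Topology

theorem IsSelfAdjoint.mul_eq_ofReal_smul_of_mul_eq {𝕜 A : Type*} [RCLike 𝕜] [Ring A] [StarRing A]
    [Module 𝕜 A] [StarModule 𝕜 A] {H P : A} {e : ℝ} (hH : IsSelfAdjoint H)
    (hP : IsSelfAdjoint P) (h : H * P = (e : 𝕜) • P) : P * H = (e : 𝕜) • P := by
  simpa only [star_mul, star_smul, hP.star_eq, hH.star_eq, RCLike.star_def, RCLike.conj_ofReal]
    using congrArg star h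

theorem HasDerivAt.mul_add_mul_eq_smul_add_smul {𝕜 𝕜' 𝔸 : Type*} [NontriviallyNormedField 𝕜]
    [NontriviallyNormedField 𝕜'] [NormedAlgebra 𝕜 𝕜'] [NormedRing 𝔸] [NormedAlgebra 𝕜 𝔸]
    [NormedAlgebra 𝕜' 𝔸] [IsScalarTower 𝕜 𝕜' 𝔸] {P H : 𝕜 → 𝔸} {c : 𝕜 → 𝕜'} {P' H' : 𝔸}
    {c' : 𝕜'} {x : 𝕜} (hP : HasDerivAt P P' x) (hH : HasDerivAt H H' x) (hc : HasDerivAt c c' x)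
    (h : ∀ᶠ α in 𝓝 x, P α * H α = c α • P α) :
    P' * H x + P x * H' = c x • P' + c' • P x :=
  (hP.mul hH).unique ((hc.smul hP).congr_of_eventuallyEq h)

theorem mul_mul_eq_neg_mul_one_sub_of_reducedResolvent {𝕜 A : Type*} [CommRing 𝕜] [Ring A]
    [Algebra 𝕜 A] {H P H' P' R : A} {e e' : 𝕜}
    (hderiv : P' * H + P * H' = e • P' + e' • P) (hPR : P * R = 0)
    (hR : (H - e • 1) * R = 1 - P) :
    P * H' * R = -(P' * (1 - P)) := by
  have hPH' : P * H' = -(P' * (H - e • 1)) + e' • P := by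
    rw [mul_sub, mul_smul_comm, mul_one]
    linear_combination (norm := abel) hderiv
  rw [hPH', add_mul, smul_mul_assoc, hPR, smul_zero, add_zero, neg_mul, mul_assoc, hR]

theorem statement17_general (a : ℝ) (ha : 0 < a)
    (H P : ℝ → (ℋ →L[ℂ] ℋ)) (E : ℝ → ℝ)
    (H' P' : ℋ →L[ℂ] ℋ) (E' : ℝ)
    (hH_diff : HasDerivAt H H' 0) (hP_diff : HasDerivAt P P' 0) (hE_diff : HasDerivAt E E' 0)
    (hH_sa : ∀ α ∈ Set.Ioo (-a) a, IsSelfAdjoint (H α))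
    (hP_sa : ∀ α ∈ Set.Ioo (-a) a, IsSelfAdjoint (P α))
    (hHP : ∀ α ∈ Set.Ioo (-a) a, H α * P α = (E α : ℂ) • P α)
    (R : ℋ →L[ℂ] ℋ)
    (hPR : P 0 * R = 0)
    (hR2 : (H 0 - (E 0 : ℂ) • 1) * R = 1 - P 0) :
    P 0 * H' * R = -(P' * (1 - P 0)) := by
  have hPH : ∀ᶠ α in 𝓝 (0 : ℝ), P α * H α = (E α : ℂ) • P α :=
    eventually_of_mem (Ioo_mem_nhds (neg_neg_iff_pos.mpr ha) ha) fun α hα =>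
      (hH_sa α hα).mul_eq_ofReal_smul_of_mul_eq (hP_sa α hα) (hHP α hα)
  exact mul_mul_eq_neg_mul_one_sub_of_reducedResolvent
    (hP_diff.mul_add_mul_eq_smul_add_smul hH_diff hE_diff.ofReal_comp hPH) hPR hR2

/-- perturbation identity of Corollary 4.1. Given differentiable-at-`0`
families `H(α)` (self-adjoint), `P(α)` (orthogonal projections), `E(α)` (reals) on `(−a,a)`
with `H(α)P(α) = E(α)P(α)`, where `P(0)` is the orthogonal projection onto `ker(H(0)−E(0))`
with reduced resolvent `R`, one has `P(0)·H′(0)·R = −P′(0)·(1 − P(0))`. -/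
theorem statement17 (a : ℝ) (ha : 0 < a)
    (H P : ℝ → (ℋ →L[ℂ] ℋ)) (E : ℝ → ℝ)
    (H' P' : ℋ →L[ℂ] ℋ) (E' : ℝ)
    (hH_diff : HasDerivAt H H' 0) (hP_diff : HasDerivAt P P' 0) (hE_diff : HasDerivAt E E' 0)
    (hH_sa : ∀ α ∈ Set.Ioo (-a) a, IsSelfAdjoint (H α))
    (hP_idem : ∀ α ∈ Set.Ioo (-a) a, P α * P α = P α)
    (hP_sa : ∀ α ∈ Set.Ioo (-a) a, IsSelfAdjoint (P α))
    (hHP : ∀ α ∈ Set.Ioo (-a) a, H α * P α = (E α : ℂ) • P α)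
    (hP0 : P 0 = orthProj (LinearMap.ker (((H 0 - (E 0 : ℂ) • 1 : ℋ →L[ℂ] ℋ) : ℋ →ₗ[ℂ] ℋ))))
    (R : ℋ →L[ℂ] ℋ)
    (hRP : R * P 0 = 0) (hPR : P 0 * R = 0)
    (hR1 : R * (H 0 - (E 0 : ℂ) • 1) = 1 - P 0)
    (hR2 : (H 0 - (E 0 : ℂ) • 1) * R = 1 - P 0) :
    P 0 * H' * R = -(P' * (1 - P 0)) :=
  statement17_general a ha H P E H' P' E' hH_diff hP_diff hE_diff hH_sa hP_sa hHP R hPR hR2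
end
end

section
/- Let ℋ be a finite-dimensional complex Hilbert space and let P : ℝ → B(ℋ) be continuously differentiable with P(t)² = P(t) and P(t)* = P(t) for all t ∈ ℝ. Define Kato's generator K(t) := i·[P′(t), P(t)]. Fix s ∈ ℝ and let U : ℝ → B(ℋ) be differentiable with U(s) = 1 and i·U′(t) = K(t)·U(t) for all t ∈ ℝ. Then U(t)·P(s) = P(t)·U(t) for all t ∈ ℝ; that is, the parallel transport intertwines the spectral projections at different times. -/
/-!
Differentiating `P² = P` gives `P' = P'P + PP'`, hence `PP'P = 0`, and from this one reads off
the commutator identity `[[P', P], P] = P'`. With `A = [P', P]` the Kato equation reads `U' = AU`,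
so `f(t) = U(t)P(s) - P(t)U(t)` solves the linear equation `f' = Af` with `f(s) = 0`:
the commutator identity turns `P'U + PAU` into `APU`. Uniqueness for linear ODEs with continuous
coefficients then forces `f = 0`.
-/

open scoped BigOperators ComplexConjugate

noncomputable section

variable {ℋ : Type*} [NormedAddCommGroup ℋ] [InnerProductSpace ℂ ℋ] [FiniteDimensional ℂ ℋ]

open Set

theorem IsIdempotentElem.commutator_mul_eq_of_eq_mul_add_mul {R : Type*} [Ring R] {p d : R}
    (hp : IsIdempotentElem p) (hd : d = d * p + p * d) :
    (d * p - p * d) * p = d + p * (d * p - p * d) := by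
  have hpp : p * p = p := hp
  have hpdp : p * d * p = 0 := by
    have h : p * d * p = p * d * p + p * d * p := by
      calc p * d * p = p * (d * p + p * d) * p := by rw [← hd]
        _ = p * d * (p * p) + (p * p) * d * p := by noncomm_ring
        _ = p * d * p + p * d * p := by rw [hpp]
    simpa using h
  calc (d * p - p * d) * p = d * p := by rw [sub_mul, mul_assoc, hpp, hpdp, sub_zero]
    _ = d - p * d := by rw [eq_sub_iff_add_eq, ← hd]
    _ = d + p * (d * p - p * d) := by rw [mul_sub, ← mul_assoc, ← mul_assoc, hpp, hpdp]; abel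

theorem HasDerivAt.eq_mul_add_mul_of_isIdempotentElem {𝕜 𝔸 : Type*} [NontriviallyNormedField 𝕜]
    [NormedRing 𝔸] [NormedAlgebra 𝕜 𝔸] {P : 𝕜 → 𝔸} {P' : 𝔸} {t : 𝕜}
    (hP : HasDerivAt P P' t) (hidem : ∀ τ, IsIdempotentElem (P τ)) :
    P' = P' * P t + P t * P' := by
  have hsq : P * P = P := funext hidem
  have := hP.mul hP
  rw [hsq] at this
  exact hP.unique this

theorem eq_zero_of_hasDerivAt_eq_mul_left {𝔸 : Type*} [NormedRing 𝔸] [NormedAlgebra ℝ 𝔸]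
    {A f : ℝ → 𝔸} (hA : Continuous A) (hf : ∀ t, HasDerivAt f (A t * f t) t) {t₀ : ℝ}
    (h₀ : f t₀ = 0) (t : ℝ) : f t = 0 := by
  set a := min t₀ t - 1
  set b := max t₀ t + 1
  obtain ⟨C, hC⟩ := (isCompact_Icc (a := a) (b := b)).exists_bound_of_continuousOn hA.continuousOn
  have hlip : ∀ τ ∈ Ioo a b, LipschitzOnWith (Real.toNNReal C) (A τ * ·) univ := by
    intro τ hτ
    refine (LipschitzWith.of_dist_le_mul fun x y => ?_).lipschitzOnWith
    rw [dist_eq_norm, dist_eq_norm, ← mul_sub]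
    exact (norm_mul_le _ _).trans <| mul_le_mul_of_nonneg_right
      ((hC τ (Ioo_subset_Icc_self hτ)).trans (Real.le_coe_toNNReal C)) (norm_nonneg _)
  have hmem : ∀ τ, min t₀ t ≤ τ → τ ≤ max t₀ t → τ ∈ Ioo a b := fun τ h₁ h₂ =>
    ⟨by linarith, by linarith⟩
  exact ODE_solution_unique_of_mem_Ioo (g := fun _ => 0) hlip
    (hmem t₀ (min_le_left _ _) (le_max_left _ _))
    (fun τ _ => ⟨hf τ, trivial⟩) (fun τ _ => ⟨by simpa using hasDerivAt_const τ (0 : 𝔸), trivial⟩)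
    h₀ (hmem t (min_le_right _ _) (le_max_right _ _))

theorem statement18_general (P : ℝ → (ℋ →L[ℂ] ℋ)) (P' : ℝ → (ℋ →L[ℂ] ℋ))
    (hP_deriv : ∀ t : ℝ, HasDerivAt P (P' t) t) (hP'_cont : Continuous P')
    (hP_idem : ∀ t : ℝ, P t * P t = P t)
    (s : ℝ) (U : ℝ → (ℋ →L[ℂ] ℋ)) (hUs : U s = 1)
    (hU : ∀ t : ℝ, HasDerivAt U
      ((-Complex.I) • ((Complex.I • (P' t * P t - P t * P' t)) * U t)) t) :
    ∀ t : ℝ, U t * P s = P t * U t := by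
  set A : ℝ → (ℋ →L[ℂ] ℋ) := fun τ => P' τ * P τ - P τ * P' τ
  have hP_cont : Continuous P := Differentiable.continuous fun τ => (hP_deriv τ).differentiableAt
  have hA_cont : Continuous A := (hP'_cont.mul hP_cont).sub (hP_cont.mul hP'_cont)
  have hAP : ∀ τ, A τ * P τ = P' τ + P τ * A τ := fun τ =>
    IsIdempotentElem.commutator_mul_eq_of_eq_mul_add_mul (hP_idem τ)
      ((hP_deriv τ).eq_mul_add_mul_of_isIdempotentElem hP_idem)
  have hU' : ∀ τ, HasDerivAt U (A τ * U τ) τ := fun τ => by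
    convert hU τ using 1
    rw [smul_mul_assoc, smul_smul, neg_mul, Complex.I_mul_I, neg_neg, one_smul]
  have hf : ∀ τ, HasDerivAt (fun x => U x * P s - P x * U x)
      (A τ * (U τ * P s - P τ * U τ)) τ := fun τ => by
    refine (((hU' τ).mul_const (P s)).sub ((hP_deriv τ).mul (hU' τ))).congr_deriv ?_
    rw [mul_sub, ← mul_assoc (A τ) (P τ), hAP]
    noncomm_ring
  have hfs : U s * P s - P s * U s = 0 := by rw [hUs, one_mul, mul_one, sub_self]
  intro t
  exact sub_eq_zero.mp (eq_zero_of_hasDerivAt_eq_mul_left hA_cont hf hfs t)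

/-- intertwining property (3.6) of Kato's parallel transport. If
`P : ℝ → B(ℋ)` is continuously differentiable with `P(t)² = P(t) = P(t)*`, `K(t) := i[P′(t),P(t)]`
is Kato's generator, and `U` solves `i U′(t) = K(t) U(t)`, `U(s) = 1`, then
`U(t) P(s) = P(t) U(t)` for all `t`. -/
theorem statement18 (P : ℝ → (ℋ →L[ℂ] ℋ)) (P' : ℝ → (ℋ →L[ℂ] ℋ))
    (hP_deriv : ∀ t : ℝ, HasDerivAt P (P' t) t) (hP'_cont : Continuous P')
    (hP_idem : ∀ t : ℝ, P t * P t = P t) (hP_sa : ∀ t : ℝ, IsSelfAdjoint (P t))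
    (s : ℝ) (U : ℝ → (ℋ →L[ℂ] ℋ)) (hUs : U s = 1)
    (hU : ∀ t : ℝ, HasDerivAt U
      ((-Complex.I) • ((Complex.I • (P' t * P t - P t * P' t)) * U t)) t) :
    ∀ t : ℝ, U t * P s = P t * U t :=
  statement18_general P P' hP_deriv hP'_cont hP_idem s U hUs hU
end
end
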